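/- The unordered configuration space D₂(S²), i.e. the quotient of F₂(S²) = {(x,y) ∈ S² × S² | x ≠ y} by the coordinate-swap involution (x,y) ↦ (y,x), is homotopy equivalent to the real projective plane RP²; indeed the map RP² → D₂(S²) induced on quotients by x ↦ (x,−x) is a homotopy equivalence. -/

import Mathlib

noncomputable section

open Metric

abbrev E3 := EuclideanSpace ℝ (Fin 3)
abbrev S2 := Metric.sphere (0 : E3) 1

/-- Ordered configuration space. -/
def Conf (n : ℕ) (Y : Type*) [TopologicalSpace Y] : Type _ :=
  {y : Fin n → Y // Function.Injective y}

instance (n : ℕ) (Y : Type*) [TopologicalSpace Y] : TopologicalSpace (Conf n Y) :=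
  instTopologicalSpaceSubtype

/-- The setoid on `Conf n Y` given by the permutation action. -/
def permSetoid (n : ℕ) (Y : Type*) [TopologicalSpace Y] : Setoid (Conf n Y) where
  r a b := ∃ σ : Equiv.Perm (Fin n), b.1 = a.1 ∘ σ
  iseqv := by
    constructor
    · exact fun a => ⟨1, by ext i; simp⟩
    · rintro a b ⟨σ, h⟩
      exact ⟨σ⁻¹, by ext i; simp [h]⟩
    · rintro a b c ⟨σ, h⟩ ⟨τ, h'⟩
      exact ⟨σ * τ, by ext i; simp [h', h]⟩

/-- Unordered configuration space. -/
def UConf (n : ℕ) (Y : Type*) [TopologicalSpace Y] : Type _ :=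
  Quotient (permSetoid n Y)

instance (n : ℕ) (Y : Type*) [TopologicalSpace Y] : TopologicalSpace (UConf n Y) :=
  instTopologicalSpaceQuotient

lemma S2.ne_neg (x : S2) : (x : E3) ≠ -(x : E3) := by
  intro h
  have hx : (x : E3) = 0 := by
    have h2 : (x : E3) + (x : E3) = 0 := by
      nth_rewrite 2 [h]; simp
    have h3 : (2 : ℝ) • (x : E3) = 0 := by rw [two_smul]; exact h2
    have := smul_eq_zero.mp h3
    simpa using this
  have := x.2
  rw [mem_sphere_zero_iff_norm] at this
  rw [hx] at this
  simp at this

/-- The antipodal setoid on the sphere. -/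
def antipodalSetoid : Setoid S2 where
  r x y := (x : E3) = y ∨ (x : E3) = -y
  iseqv := by
    constructor
    · exact fun x => Or.inl rfl
    · rintro x y (h | h)
      · exact Or.inl h.symm
      · exact Or.inr (by rw [h]; simp)
    · rintro x y z (h | h) (h' | h')
      · exact Or.inl (h.trans h')
      · exact Or.inr (by rw [h, h'])
      · exact Or.inr (by rw [h, h'])
      · exact Or.inl (by rw [h, h']; simp)

/-- The real projective plane, as the quotient of the sphere by the antipodal map. -/
def RP2 : Type _ := Quotient antipodalSetoid

instance : TopologicalSpace RP2 := instTopologicalSpaceQuotient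

/-- The canonical projection from the sphere to the projective plane. -/
def pS2 : S2 → RP2 := Quotient.mk antipodalSetoid

lemma pS2.continuous : Continuous pS2 := continuous_quotient_mk'

/-- The underlying vector of the map `U_P`. -/
def Uvec (P x : E3) : E3 := (2 * inner ℝ P x : ℝ) • x - P

lemma Uvec.norm_eq (P x : E3) (hP : ‖P‖ = 1) (hx : ‖x‖ = 1) : ‖Uvec P x‖ = 1 := by
  have h1 : ‖Uvec P x‖ ^ 2 = 1 := by
    rw [Uvec, norm_sub_sq_real, norm_smul, real_inner_smul_left, real_inner_comm x P, hx, hP,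
      Real.norm_eq_abs, mul_one, one_pow, sq_abs]
    ring
  nlinarith [norm_nonneg (Uvec P x)]

lemma Uvec.neg (P x : E3) : Uvec P (-x) = Uvec P x := by
  simp [Uvec, inner_neg_right]

/-- The map `U_P` on the sphere. -/
def USph (P x : S2) : S2 :=
  ⟨Uvec P.1 x.1, by
    rw [mem_sphere_zero_iff_norm]
    exact Uvec.norm_eq _ _ (by simp [← mem_sphere_zero_iff_norm, P.2])
      (by simp [← mem_sphere_zero_iff_norm, x.2])⟩

lemma USph.continuous (P : S2) : Continuous (USph P) := by
  apply Continuous.subtype_mk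
  apply Continuous.sub
  · exact (continuous_const.mul (Continuous.inner (𝕜 := ℝ) (E := E3) continuous_const continuous_subtype_val)).smul
      continuous_subtype_val
  · exact continuous_const

/-- The map `W_P` on the projective plane. -/
def WP (P : S2) : RP2 → RP2 :=
  Quotient.lift (fun x => pS2 (USph P x)) (by
    rintro a b (h | h)
    · have hab : a = b := Subtype.ext h
      show pS2 (USph P a) = pS2 (USph P b)
      rw [hab]
    · have hab : USph P a = USph P b :=
        Subtype.ext (show Uvec P.1 a.1 = Uvec P.1 b.1 by rw [h, Uvec.neg])
      show pS2 (USph P a) = pS2 (USph P b)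
      rw [hab])

lemma WP.continuous (P : S2) : Continuous (WP P) :=
  Continuous.quotient_lift (pS2.continuous.comp (USph.continuous P)) _

/-- `W_P` as a continuous map. -/
def WPc (P : S2) : C(RP2, RP2) := ⟨WP P, WP.continuous P⟩

lemma WPc_apply (P : S2) (x : S2) : WPc P (pS2 x) = pS2 (USph P x) := rfl

lemma S2.ne_neg' (x : S2) : x ≠ -x := fun h => S2.ne_neg x (congrArg Subtype.val h)

/-- The map `x ↦ (x, -x)` into the ordered configuration space `F₂(S²)`. -/
def pairMap (x : S2) : Conf 2 S2 :=
  ⟨![x, -x], by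
    intro i j hij
    fin_cases i <;> fin_cases j <;> simp_all
    · exact S2.ne_neg' x hij
    · exact S2.ne_neg' x hij.symm⟩


/-!
The two maps are `f [x] = {x, -x}` and `g {x, y} = [(x - y) / ‖x - y‖]`, well defined since
swapping `x` and `y` negates the direction `u = (x - y) / ‖x - y‖`. Clearly `g ∘ f = id`. For
`f ∘ g ≃ id`, move `x` along the great circle towards `u` and `y` towards `-u`; since `x - y`
points from `y` to `x`, the moving points stay on opposite sides of the plane `u^⊥`, so they
never collide, and the deformation commutes with the swap, hence descends to `D₂(S²)`.
-/

open NormedSpace RealInnerProductSpace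

section UnitDirection

variable {E : Type*} [NormedAddCommGroup E] [InnerProductSpace ℝ E] {x y : E} {t : ℝ}

theorem Continuous.normalize {X : Type*} [TopologicalSpace X] {f : X → E} (hf : Continuous f)
    (h : ∀ p, f p ≠ 0) : Continuous fun p => NormedSpace.normalize (f p) :=
  (hf.norm.inv₀ fun p => norm_ne_zero_iff.mpr (h p)).smul hf

theorem inner_normalize_pos {v w : E} (h : 0 < ⟪v, w⟫) :
    0 < ⟪NormedSpace.normalize v, w⟫ := by
  have hv : v ≠ 0 := by rintro rfl; simp at h
  rw [NormedSpace.normalize, real_inner_smul_left]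
  exact mul_pos (inv_pos.mpr (norm_pos_iff.mpr hv)) h

theorem normalize_sub_swap (x y : E) :
    NormedSpace.normalize (y - x) = -NormedSpace.normalize (x - y) := by
  rw [← neg_sub, normalize_neg]

theorem normalize_sub_neg_self (hx : ‖x‖ = 1) : NormedSpace.normalize (x - -x) = x := by
  rw [sub_neg_eq_add, ← two_smul ℝ, normalize_smul_of_pos two_pos,
    normalize_eq_self_of_norm_eq_one hx]

/-- On the unit sphere, `⟪x, x - y⟫ = ‖x - y‖² / 2`. -/
theorem inner_normalize_sub_pos (hx : ‖x‖ = 1) (hy : ‖y‖ = 1) (hxy : x ≠ y) :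
    0 < ⟪x, NormedSpace.normalize (x - y)⟫ := by
  rw [real_inner_comm]
  refine inner_normalize_pos ?_
  have hsq : ‖x - y‖ ^ 2 = 2 * ⟪x - y, x⟫ := by
    rw [norm_sub_sq_real, inner_sub_left, real_inner_self_eq_norm_sq, real_inner_comm, hx, hy]
    ring
  have : 0 < ‖x - y‖ := norm_pos_iff.mpr (sub_ne_zero.mpr hxy)
  nlinarith

def slideVec (t : ℝ) (x y : E) : E := (1 - t) • x + t • NormedSpace.normalize (x - y)

/-- For `t ∈ [0, 1]` and unit vectors `x ≠ y`, the great-circle path from `x` to the unit vector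
pointing from `y` to `x`. -/
def slide (t : ℝ) (x y : E) : E := NormedSpace.normalize (slideVec t x y)

section

variable (hx : ‖x‖ = 1) (hy : ‖y‖ = 1) (hxy : x ≠ y) (ht₀ : 0 ≤ t) (ht₁ : t ≤ 1)
include hx hy hxy ht₀ ht₁

theorem inner_slideVec_pos : 0 < ⟪slideVec t x y, NormedSpace.normalize (x - y)⟫ := by
  have hu : ‖NormedSpace.normalize (x - y)‖ = 1 :=
    norm_normalize_eq_one_iff.mpr (sub_ne_zero.mpr hxy)
  rw [slideVec, inner_add_left, real_inner_smul_left, real_inner_smul_left,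
    real_inner_self_eq_norm_sq, hu]
  have := inner_normalize_sub_pos hx hy hxy
  rcases ht₀.eq_or_lt with rfl | ht
  · simpa using this
  · nlinarith

theorem slideVec_ne_zero : slideVec t x y ≠ 0 := by
  intro h
  simpa [h] using inner_slideVec_pos hx hy hxy ht₀ ht₁

theorem norm_slide : ‖slide t x y‖ = 1 :=
  norm_normalize_eq_one_iff.mpr (slideVec_ne_zero hx hy hxy ht₀ ht₁)

theorem inner_slide_pos : 0 < ⟪slide t x y, NormedSpace.normalize (x - y)⟫ :=
  inner_normalize_pos (inner_slideVec_pos hx hy hxy ht₀ ht₁)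

/-- The two endpoints stay separated by the plane orthogonal to `x - y`. -/
theorem slide_ne_slide_swap : slide t x y ≠ slide t y x := by
  intro h
  have h₁ := inner_slide_pos hx hy hxy ht₀ ht₁
  have h₂ := inner_slide_pos hy hx hxy.symm ht₀ ht₁
  rw [normalize_sub_swap, inner_neg_right, ← h] at h₂
  linarith

end

theorem slide_zero (hx : ‖x‖ = 1) : slide 0 x y = x := by
  simp [slide, slideVec, normalize_eq_self_of_norm_eq_one hx]

theorem slide_one : slide 1 x y = NormedSpace.normalize (x - y) := by
  simp [slide, slideVec, normalize_normalize]

end UnitDirection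

namespace Conf

variable {Y : Type*} [TopologicalSpace Y]

def mk₂ (x y : Y) (h : x ≠ y) : Conf 2 Y :=
  ⟨![x, y], by
    intro i j hij
    fin_cases i <;> fin_cases j <;> simp_all [eq_comm]⟩

theorem continuous_mk₂ {X : Type*} [TopologicalSpace X] {f g : X → Y} (hf : Continuous f)
    (hg : Continuous g) (h : ∀ p, f p ≠ g p) : Continuous fun p => mk₂ (f p) (g p) (h p) := by
  refine Continuous.subtype_mk (continuous_pi fun i => ?_) _
  fin_cases i
  exacts [hf, hg]

theorem continuous_apply {n : ℕ} (i : Fin n) : Continuous fun c : Conf n Y => c.1 i :=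
  (_root_.continuous_apply i).comp continuous_subtype_val

theorem fst_ne_snd (c : Conf 2 Y) : c.1 0 ≠ c.1 1 := fun h => absurd (c.2 h) (by decide)

def swap (c : Conf 2 Y) : Conf 2 Y := mk₂ (c.1 1) (c.1 0) c.fst_ne_snd.symm

theorem continuous_swap : Continuous (swap : Conf 2 Y → Conf 2 Y) :=
  continuous_mk₂ (continuous_apply 1) (continuous_apply 0) _

theorem eq_or_eq_swap_of_rel {a b : Conf 2 Y} (h : (permSetoid 2 Y).r a b) :
    b = a ∨ b = a.swap := by
  obtain ⟨σ, hσ⟩ := h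
  have hperm : ∀ τ : Equiv.Perm (Fin 2), τ = 1 ∨ τ = Equiv.swap 0 1 := by decide
  rcases hperm σ with rfl | rfl
  · exact Or.inl (Subtype.ext hσ)
  · refine Or.inr (Subtype.ext (hσ.trans (funext fun i => ?_)))
    fin_cases i <;> rfl

end Conf

namespace UConf

variable {Y Z : Type*} [TopologicalSpace Y] [TopologicalSpace Z]

def mk (c : Conf 2 Y) : UConf 2 Y := Quotient.mk (permSetoid 2 Y) c

theorem mk_swap (c : Conf 2 Y) : mk c.swap = mk c :=
  Quotient.sound (show (permSetoid 2 Y).r c.swap c from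
    ⟨Equiv.swap 0 1, funext fun i => by fin_cases i <;> rfl⟩)

def lift (f : C(Conf 2 Y, Z)) (hf : ∀ c, f c.swap = f c) : C(UConf 2 Y, Z) :=
  ⟨Quotient.lift f fun a b h => by
      rcases Conf.eq_or_eq_swap_of_rel h with rfl | rfl
      exacts [rfl, (hf a).symm],
    f.continuous.quotient_lift _⟩

/-- Continuity holds because `id × mk` is a quotient map, `X` being locally compact. -/
def liftProd {X : Type*} [TopologicalSpace X] [LocallyCompactSpace X] (f : C(X × Conf 2 Y, Z))
    (hf : ∀ x c, f (x, c.swap) = f (x, c)) : C(X × UConf 2 Y, Z) :=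
  ⟨fun p => lift (f.comp (.prodMk (.const _ p.1) (.id _))) (hf p.1) p.2,
    isQuotientMap_quot_mk.continuous_lift_prod_right f.continuous⟩

end UConf

theorem Conf.coe_fst_ne_coe_snd (c : Conf 2 S2) : (c.1 0 : E3) ≠ c.1 1 :=
  Subtype.coe_ne_coe.mpr c.fst_ne_snd

def dirSphere (c : Conf 2 S2) : S2 :=
  ⟨NormedSpace.normalize ((c.1 0 : E3) - c.1 1), mem_sphere_zero_iff_norm.mpr <|
    norm_normalize_eq_one_iff.mpr (sub_ne_zero.mpr c.coe_fst_ne_coe_snd)⟩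

theorem dirSphere_swap (c : Conf 2 S2) : dirSphere c.swap = -dirSphere c :=
  Subtype.ext (normalize_sub_swap _ _)

theorem continuous_dirSphere : Continuous dirSphere := by
  refine Continuous.subtype_mk (Continuous.normalize ?_ fun c => ?_) _
  · exact (continuous_subtype_val.comp (Conf.continuous_apply 0)).sub
      (continuous_subtype_val.comp (Conf.continuous_apply 1))
  · exact sub_ne_zero.mpr c.coe_fst_ne_coe_snd

theorem pS2_neg (x : S2) : pS2 (-x) = pS2 x := Quotient.sound (Or.inr (coe_neg_sphere x))

theorem pairMap_neg (x : S2) : pairMap (-x) = (pairMap x).swap :=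
  Subtype.ext (funext fun i => by fin_cases i <;> simp [pairMap, Conf.swap, Conf.mk₂])

theorem dirSphere_pairMap (x : S2) : dirSphere (pairMap x) = x :=
  Subtype.ext (by
    simpa [dirSphere, pairMap] using normalize_sub_neg_self (norm_eq_of_mem_sphere x))

theorem continuous_pairMap : Continuous pairMap :=
  Conf.continuous_mk₂ continuous_id continuous_neg S2.ne_neg'

def antipodalPairs : C(RP2, UConf 2 S2) :=
  ⟨Quotient.lift (fun x => UConf.mk (pairMap x)) fun a b h => by
      obtain rfl | rfl : a = b ∨ a = -b := h.imp Subtype.ext Subtype.ext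
      · rfl
      · rw [pairMap_neg, UConf.mk_swap],
    (continuous_quot_mk.comp continuous_pairMap).quotient_lift _⟩

def pairDirection : C(UConf 2 S2, RP2) :=
  UConf.lift ⟨pS2 ∘ dirSphere, pS2.continuous.comp continuous_dirSphere⟩ fun c => by
    simp only [ContinuousMap.coe_mk, Function.comp_apply, dirSphere_swap, pS2_neg]

theorem pairDirection_comp_antipodalPairs :
    pairDirection.comp antipodalPairs = ContinuousMap.id RP2 :=
  ContinuousMap.ext fun z => by
    induction z using Quotient.ind with
    | _ x => exact congrArg pS2 (dirSphere_pairMap x)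

section Slide

variable (t : unitInterval) (c : Conf 2 S2)

def slideSphere : S2 :=
  ⟨slide t (c.1 0) (c.1 1), mem_sphere_zero_iff_norm.mpr <|
    norm_slide (norm_eq_of_mem_sphere _) (norm_eq_of_mem_sphere _) c.coe_fst_ne_coe_snd
      t.2.1 t.2.2⟩

def slideConf : Conf 2 S2 :=
  Conf.mk₂ (slideSphere t c) (slideSphere t c.swap) fun h =>
    slide_ne_slide_swap (norm_eq_of_mem_sphere _) (norm_eq_of_mem_sphere _) c.coe_fst_ne_coe_snd
      t.2.1 t.2.2 (congrArg Subtype.val h)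

theorem slideConf_swap : slideConf t c.swap = (slideConf t c).swap := rfl

theorem slideConf_zero : slideConf 0 c = c :=
  Subtype.ext (funext fun i => by
    fin_cases i <;> exact Subtype.ext (slide_zero (norm_eq_of_mem_sphere _)))

theorem slideConf_one : slideConf 1 c = pairMap (dirSphere c) := by
  have h (c : Conf 2 S2) : slideSphere 1 c = dirSphere c := Subtype.ext slide_one
  refine Subtype.ext (funext fun i => ?_)
  fin_cases i
  · exact h c
  · exact (h c.swap).trans (dirSphere_swap c)

end Slide

theorem continuous_slideSphere :
    Continuous fun p : unitInterval × Conf 2 S2 => slideSphere p.1 p.2 := by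
  have ht : Continuous fun p : unitInterval × Conf 2 S2 => (p.1 : ℝ) :=
    continuous_subtype_val.comp continuous_fst
  have hx (i : Fin 2) : Continuous fun p : unitInterval × Conf 2 S2 => (p.2.1 i : E3) :=
    continuous_subtype_val.comp ((Conf.continuous_apply i).comp continuous_snd)
  have hu : Continuous fun p : unitInterval × Conf 2 S2 =>
      NormedSpace.normalize ((p.2.1 0 : E3) - p.2.1 1) :=
    ((hx 0).sub (hx 1)).normalize fun p => sub_ne_zero.mpr p.2.coe_fst_ne_coe_snd
  refine Continuous.subtype_mk (Continuous.normalize ?_ fun p => ?_) _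
  · exact ((continuous_const.sub ht).smul (hx 0)).add (ht.smul hu)
  · exact slideVec_ne_zero (norm_eq_of_mem_sphere _) (norm_eq_of_mem_sphere _)
      p.2.coe_fst_ne_coe_snd p.1.2.1 p.1.2.2

theorem continuous_slideConf :
    Continuous fun p : unitInterval × Conf 2 S2 => slideConf p.1 p.2 :=
  Conf.continuous_mk₂ continuous_slideSphere
    (continuous_slideSphere.comp
      (continuous_fst.prodMk (Conf.continuous_swap.comp continuous_snd))) _

def slideHomotopy :
    ContinuousMap.Homotopy (ContinuousMap.id _) (antipodalPairs.comp pairDirection) where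
  toContinuousMap := UConf.liftProd
    ⟨fun p => UConf.mk (slideConf p.1 p.2), continuous_quot_mk.comp continuous_slideConf⟩
    fun t c => (congrArg UConf.mk (slideConf_swap t c)).trans (UConf.mk_swap _)
  map_zero_left z := by
    induction z using Quotient.ind with
    | _ c => exact congrArg UConf.mk (slideConf_zero c)
  map_one_left z := by
    induction z using Quotient.ind with
    | _ c => exact congrArg UConf.mk (slideConf_one c)

/-- The map `RP² → D₂(S²)` induced on quotients by `x ↦ (x, -x)` is a homotopy
equivalence; in particular `D₂(S²)` is homotopy equivalent to `RP²`. -/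
theorem stmt2 :
    ∃ e : ContinuousMap.HomotopyEquiv RP2 (UConf 2 S2),
      ∀ x : S2, e.toFun (pS2 x) = Quotient.mk (permSetoid 2 S2) (pairMap x) :=
  ⟨⟨antipodalPairs, pairDirection,
      pairDirection_comp_antipodalPairs ▸ .refl _, ⟨slideHomotopy.symm⟩⟩,
    fun _ => rfl⟩
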